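/- arXiv:1201.4418 — 4 statements merged into one kernel-verified Lean document; each statement's English description precedes it below -/
import Mathlib

section
/- Hall's theorem: the map sending a finite word w over the alphabet {U, L, R} to the integer vector (product of the corresponding Hall matrices in the order of the word) · (3,4,5)ᵀ is a bijection between the set of all such words (including the empty word) and the set of triples (a,b,c) of positive integers with a² + b² = c², gcd(a,b) = 1, and a odd. -/
open Matrix

/-- The three Hall matrices `U`, `L`, `R`. -/
def hallMatrix : Fin 3 → Matrix (Fin 3) (Fin 3) ℤ :=
  ![!![1, 2, 2; 2, 1, 2; 2, 2, 3],
    !![1, -2, 2; 2, -1, 2; 2, -2, 3],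
    !![-1, 2, 2; -2, 1, 2; -2, 2, 3]]

def PPT : Set (Fin 3 → ℤ) :=
  {v | 0 < v 0 ∧ 0 < v 1 ∧ 0 < v 2 ∧
    v 0 ^ 2 + v 1 ^ 2 = v 2 ^ 2 ∧ Int.gcd (v 0) (v 1) = 1 ∧ Odd (v 0)}

lemma mk_mem {a b c : ℤ} (h0 : 0 < a) (h1 : 0 < b) (h2 : 0 < c)
    (hpy : a ^ 2 + b ^ 2 = c ^ 2) (hg : Int.gcd a b = 1) (ho : Odd a) :
    (![a, b, c] : Fin 3 → ℤ) ∈ PPT :=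
  ⟨h0, h1, h2, hpy, hg, ho⟩

lemma hm0_apply (v : Fin 3 → ℤ) :
    hallMatrix 0 *ᵥ v = ![v 0 + 2*v 1 + 2*v 2, 2*v 0 + v 1 + 2*v 2, 2*v 0 + 2*v 1 + 3*v 2] := by
  funext i; fin_cases i <;>
    simp [hallMatrix, Matrix.mulVec, dotProduct, Fin.sum_univ_three]

lemma hm1_apply (v : Fin 3 → ℤ) :
    hallMatrix 1 *ᵥ v = ![v 0 - 2*v 1 + 2*v 2, 2*v 0 - v 1 + 2*v 2, 2*v 0 - 2*v 1 + 3*v 2] := by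
  funext i; fin_cases i <;>
    simp [hallMatrix, Matrix.mulVec, dotProduct, Fin.sum_univ_three] <;> ring

lemma hm2_apply (v : Fin 3 → ℤ) :
    hallMatrix 2 *ᵥ v = ![-v 0 + 2*v 1 + 2*v 2, -2*v 0 + v 1 + 2*v 2, -2*v 0 + 2*v 1 + 3*v 2] := by
  funext i; fin_cases i <;>
    simp [hallMatrix, Matrix.mulVec, dotProduct, Fin.sum_univ_three] <;> ring

lemma coprime_aux (a' b' c' a b : ℤ) (hpy : a' ^ 2 + b' ^ 2 = c' ^ 2)
    (hA : ∀ d : ℤ, d ∣ a' → d ∣ b' → d ∣ c' → d ∣ a)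
    (hB : ∀ d : ℤ, d ∣ a' → d ∣ b' → d ∣ c' → d ∣ b)
    (h1 : Int.gcd a b = 1) : Int.gcd a' b' = 1 := by
  have hga : (Int.gcd a' b' : ℤ) ∣ a' := Int.gcd_dvd_left a' b'
  have hgb : (Int.gcd a' b' : ℤ) ∣ b' := Int.gcd_dvd_right a' b'
  have hgc : (Int.gcd a' b' : ℤ) ∣ c' := by
    refine (Int.pow_dvd_pow_iff two_ne_zero).mp ?_
    rw [← hpy]
    exact dvd_add (pow_dvd_pow_of_dvd hga 2) (pow_dvd_pow_of_dvd hgb 2)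
  have h2 : (Int.gcd a' b' : ℤ) ∣ (Int.gcd a b : ℤ) :=
    Int.dvd_coe_gcd (hA _ hga hgb hgc) (hB _ hga hgb hgc)
  rw [h1] at h2
  have h3 : Int.gcd a' b' ∣ 1 := by exact_mod_cast h2
  exact Nat.dvd_one.mp h3

lemma vec_eta (v : Fin 3 → ℤ) : ![v 0, v 1, v 2] = v := by
  funext i; fin_cases i <;> rfl

lemma step_mem {v : Fin 3 → ℤ} (hv : v ∈ PPT) (i : Fin 3) : hallMatrix i *ᵥ v ∈ PPT := by
  obtain ⟨h0, h1, h2, hpy, hg, ho⟩ := hv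
  obtain ⟨k, hk⟩ := ho
  have hca : v 0 < v 2 := by nlinarith
  have hcb : v 1 < v 2 := by nlinarith
  rcases (by decide : ∀ j : Fin 3, j = 0 ∨ j = 1 ∨ j = 2) i with rfl | rfl | rfl
  · rw [hm0_apply]
    refine mk_mem (by linarith) (by linarith) (by linarith) (by linear_combination hpy)
      (coprime_aux (v 0 + 2*v 1 + 2*v 2) (2*v 0 + v 1 + 2*v 2) (2*v 0 + 2*v 1 + 3*v 2) (v 0) (v 1) (by linear_combination hpy) ?_ ?_ hg) ⟨k + v 1 + v 2, by rw [hk]; ring⟩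
    · intro d d1 d2 d3
      have h : v 0 = (v 0 + 2*v 1 + 2*v 2) + 2*(2*v 0 + v 1 + 2*v 2) - 2*(2*v 0 + 2*v 1 + 3*v 2) := by ring
      rw [h]; exact dvd_sub (dvd_add d1 (d2.mul_left 2)) (d3.mul_left 2)
    · intro d d1 d2 d3
      have h : v 1 = 2*(v 0 + 2*v 1 + 2*v 2) + (2*v 0 + v 1 + 2*v 2) - 2*(2*v 0 + 2*v 1 + 3*v 2) := by ring
      rw [h]; exact dvd_sub (dvd_add (d1.mul_left 2) d2) (d3.mul_left 2)
  · rw [hm1_apply]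
    refine mk_mem (by linarith) (by linarith) (by linarith) (by linear_combination hpy)
      (coprime_aux (v 0 - 2*v 1 + 2*v 2) (2*v 0 - v 1 + 2*v 2) (2*v 0 - 2*v 1 + 3*v 2) (v 0) (v 1) (by linear_combination hpy) ?_ ?_ hg) ⟨k - v 1 + v 2, by rw [hk]; ring⟩
    · intro d d1 d2 d3
      have h : v 0 = (v 0 - 2*v 1 + 2*v 2) + 2*(2*v 0 - v 1 + 2*v 2) - 2*(2*v 0 - 2*v 1 + 3*v 2) := by ring
      rw [h]; exact dvd_sub (dvd_add d1 (d2.mul_left 2)) (d3.mul_left 2)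
    · intro d d1 d2 d3
      have h : v 1 = -2*(v 0 - 2*v 1 + 2*v 2) - (2*v 0 - v 1 + 2*v 2) + 2*(2*v 0 - 2*v 1 + 3*v 2) := by ring
      rw [h]; exact dvd_add (dvd_sub ((d1.mul_left (-2))) d2) (d3.mul_left 2)
  · rw [hm2_apply]
    refine mk_mem (by linarith) (by linarith) (by linarith) (by linear_combination hpy)
      (coprime_aux (-v 0 + 2*v 1 + 2*v 2) (-2*v 0 + v 1 + 2*v 2) (-2*v 0 + 2*v 1 + 3*v 2) (v 0) (v 1) (by linear_combination hpy) ?_ ?_ hg) ⟨v 1 + v 2 - k - 1, by rw [hk]; ring⟩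
    · intro d d1 d2 d3
      have h : v 0 = -(-v 0 + 2*v 1 + 2*v 2) - 2*(-2*v 0 + v 1 + 2*v 2) + 2*(-2*v 0 + 2*v 1 + 3*v 2) := by ring
      rw [h]; exact dvd_add (dvd_sub (dvd_neg.mpr d1) (d2.mul_left 2)) (d3.mul_left 2)
    · intro d d1 d2 d3
      have h : v 1 = 2*(-v 0 + 2*v 1 + 2*v 2) + (-2*v 0 + v 1 + 2*v 2) - 2*(-2*v 0 + 2*v 1 + 3*v 2) := by ring
      rw [h]; exact dvd_sub (dvd_add (d1.mul_left 2) d2) (d3.mul_left 2)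

lemma not_parent_345 (i : Fin 3) {w : Fin 3 → ℤ} (hw : w ∈ PPT) :
    hallMatrix i *ᵥ w ≠ ![3, 4, 5] := by
  obtain ⟨h0, h1, h2, -, -, -⟩ := hw
  intro h
  rcases (by decide : ∀ j : Fin 3, j = 0 ∨ j = 1 ∨ j = 2) i with rfl | rfl | rfl
  · rw [hm0_apply] at h
    have e0 := congrFun h 0
    have e1 := congrFun h 1
    have e2 := congrFun h 2
    simp at e0 e1 e2
    linarith
  · rw [hm1_apply] at h
    have e0 := congrFun h 0
    have e1 := congrFun h 1
    have e2 := congrFun h 2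
    simp at e0 e1 e2
    linarith
  · rw [hm2_apply] at h
    have e0 := congrFun h 0
    have e1 := congrFun h 1
    have e2 := congrFun h 2
    simp at e0 e1 e2
    linarith

lemma unique_parent {v w : Fin 3 → ℤ} (hv : v ∈ PPT) (hw : w ∈ PPT) {i j : Fin 3}
    (h : hallMatrix i *ᵥ v = hallMatrix j *ᵥ w) : i = j ∧ v = w := by
  obtain ⟨hv0, hv1, hv2, -, -, -⟩ := hv
  obtain ⟨hw0, hw1, hw2, -, -, -⟩ := hw
  rcases (by decide : ∀ j : Fin 3, j = 0 ∨ j = 1 ∨ j = 2) i with rfl | rfl | rfl <;>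
    rcases (by decide : ∀ j : Fin 3, j = 0 ∨ j = 1 ∨ j = 2) j with rfl | rfl | rfl <;>
    [rw [hm0_apply, hm0_apply] at h; rw [hm0_apply, hm1_apply] at h;
     rw [hm0_apply, hm2_apply] at h; rw [hm1_apply, hm0_apply] at h;
     rw [hm1_apply, hm1_apply] at h; rw [hm1_apply, hm2_apply] at h;
     rw [hm2_apply, hm0_apply] at h; rw [hm2_apply, hm1_apply] at h;
     rw [hm2_apply, hm2_apply] at h] <;>
  · have e0 := congrFun h 0
    have e1 := congrFun h 1
    have e2 := congrFun h 2
    simp at e0 e1 e2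
    first
      | exact ⟨rfl, by funext k; fin_cases k <;> · simp; linarith⟩
      | (exfalso; linarith)

lemma descent {v : Fin 3 → ℤ} (hv : v ∈ PPT) (hne : v ≠ ![3, 4, 5]) :
    ∃ i w, w ∈ PPT ∧ hallMatrix i *ᵥ w = v ∧ w 2 < v 2 := by
  obtain ⟨h0, h1, h2, hpy, hg, ho⟩ := hv
  obtain ⟨k, hk⟩ := ho
  have hca : v 0 < v 2 := by nlinarith
  have hcb : v 1 < v 2 := by nlinarith
  have h3c : 2*v 0 + 2*v 1 < 3*v 2 := by nlinarith [sq_nonneg (v 0 - v 1)]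
  have hab : v 2 < v 0 + v 1 := by nlinarith
  rcases lt_trichotomy (4*v 0) (3*v 1) with h4 | h4 | h4
  · -- L case
    have hA : 2*v 2 < v 0 + 2*v 1 := by nlinarith
    have hB : 2*v 0 + v 1 < 2*v 2 := by nlinarith
    refine ⟨1, ![v 0 + 2*v 1 - 2*v 2, -2*v 0 - v 1 + 2*v 2, 3*v 2 - 2*v 0 - 2*v 1],
      mk_mem (by linarith) (by linarith) (by linarith) (by linear_combination hpy)
        (coprime_aux (v 0 + 2*v 1 - 2*v 2) (-2*v 0 - v 1 + 2*v 2) (3*v 2 - 2*v 0 - 2*v 1) (v 0) (v 1) (by linear_combination hpy) ?_ ?_ hg)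
        ⟨k + v 1 - v 2, by rw [hk]; ring⟩, ?_, by simp; linarith⟩
    · intro d d1 d2 d3
      have h : v 0 = (v 0 + 2*v 1 - 2*v 2) - 2*(-2*v 0 - v 1 + 2*v 2) + 2*(3*v 2 - 2*v 0 - 2*v 1) := by
        ring
      rw [h]; exact dvd_add (dvd_sub d1 (d2.mul_left 2)) (d3.mul_left 2)
    · intro d d1 d2 d3
      have h : v 1 = 2*(v 0 + 2*v 1 - 2*v 2) - (-2*v 0 - v 1 + 2*v 2) + 2*(3*v 2 - 2*v 0 - 2*v 1) := by
        ring
      rw [h]; exact dvd_add (dvd_sub (d1.mul_left 2) d2) (d3.mul_left 2)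
    · rw [hm1_apply]
      funext j; fin_cases j <;> simp <;> ring
  · -- 4a = 3b : forces (3,4,5)
    exfalso
    apply hne
    have h3a : (3:ℤ) ∣ v 0 := by
      have hd : (3:ℤ) ∣ 4 * v 0 := ⟨v 1, by linarith⟩
      have := dvd_sub hd (dvd_mul_right 3 (v 0))
      simpa [show 4*v 0 - 3*v 0 = v 0 from by ring] using this
    obtain ⟨a1, ha1⟩ := h3a
    have hb4 : v 1 = 4 * a1 := by linarith
    have hpos : 0 < a1 := by linarith
    have hk1 : a1 = 1 := by
      have d1 : a1 ∣ v 0 := ⟨3, by linarith⟩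
      have d2 : a1 ∣ v 1 := ⟨4, by linarith⟩
      have hdg := Int.dvd_coe_gcd d1 d2
      rw [hg] at hdg
      exact Int.eq_one_of_dvd_one hpos.le (by exact_mod_cast hdg)
    have hA : v 0 = 3 := by rw [ha1, hk1]; ring
    have hB : v 1 = 4 := by rw [hb4, hk1]; ring
    have hC : v 2 = 5 := by nlinarith
    funext i; fin_cases i <;> simp [hA, hB, hC]
  · rcases lt_trichotomy (3*v 0) (4*v 1) with h5 | h5 | h5
    · -- U case
      have hA : 2*v 2 < v 0 + 2*v 1 := by nlinarith
      have hB : 2*v 2 < 2*v 0 + v 1 := by nlinarith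
      refine ⟨0, ![v 0 + 2*v 1 - 2*v 2, 2*v 0 + v 1 - 2*v 2, 3*v 2 - 2*v 0 - 2*v 1],
        mk_mem (by linarith) (by linarith) (by linarith) (by linear_combination hpy)
          (coprime_aux (v 0 + 2*v 1 - 2*v 2) (2*v 0 + v 1 - 2*v 2) (3*v 2 - 2*v 0 - 2*v 1) (v 0) (v 1) (by linear_combination hpy) ?_ ?_ hg)
          ⟨k + v 1 - v 2, by rw [hk]; ring⟩, ?_, by simp; linarith⟩
      · intro d d1 d2 d3
        have h : v 0 = (v 0 + 2*v 1 - 2*v 2) + 2*(2*v 0 + v 1 - 2*v 2) + 2*(3*v 2 - 2*v 0 - 2*v 1) := by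
          ring
        rw [h]; exact dvd_add (dvd_add d1 (d2.mul_left 2)) (d3.mul_left 2)
      · intro d d1 d2 d3
        have h : v 1 = 2*(v 0 + 2*v 1 - 2*v 2) + (2*v 0 + v 1 - 2*v 2) + 2*(3*v 2 - 2*v 0 - 2*v 1) := by
          ring
        rw [h]; exact dvd_add (dvd_add (d1.mul_left 2) d2) (d3.mul_left 2)
      · rw [hm0_apply]
        funext j; fin_cases j <;> simp <;> ring
    · -- 3a = 4b : impossible by parity
      omega
    · -- R case
      have hA : v 0 + 2*v 1 < 2*v 2 := by nlinarith
      have hB : 2*v 2 < 2*v 0 + v 1 := by nlinarith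
      refine ⟨2, ![-v 0 - 2*v 1 + 2*v 2, 2*v 0 + v 1 - 2*v 2, 3*v 2 - 2*v 0 - 2*v 1],
        mk_mem (by linarith) (by linarith) (by linarith) (by linear_combination hpy)
          (coprime_aux (-v 0 - 2*v 1 + 2*v 2) (2*v 0 + v 1 - 2*v 2) (3*v 2 - 2*v 0 - 2*v 1) (v 0) (v 1) (by linear_combination hpy) ?_ ?_ hg)
          ⟨v 2 - v 1 - k - 1, by rw [hk]; ring⟩, ?_, by simp; linarith⟩
      · intro d d1 d2 d3
        have h : v 0 = -(-v 0 - 2*v 1 + 2*v 2) + 2*(2*v 0 + v 1 - 2*v 2) + 2*(3*v 2 - 2*v 0 - 2*v 1) := by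
          ring
        rw [h]; exact dvd_add (dvd_add (dvd_neg.mpr d1) (d2.mul_left 2)) (d3.mul_left 2)
      · intro d d1 d2 d3
        have h : v 1 = -2*(-v 0 - 2*v 1 + 2*v 2) + (2*v 0 + v 1 - 2*v 2) + 2*(3*v 2 - 2*v 0 - 2*v 1) := by
          ring
        rw [h]; exact dvd_add (dvd_add (d1.mul_left (-2)) d2) (d3.mul_left 2)
      · rw [hm2_apply]
        funext j; fin_cases j <;> simp <;> ring

/-- **Hall's theorem.** The map sending a word over `{U, L, R}` to the
product of the corresponding Hall matrices applied to `(3,4,5)ᵀ` is a bijection from the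
set of all words onto the set of triples `(a,b,c)` of positive integers with
`a² + b² = c²`, `gcd(a,b) = 1` and `a` odd. -/
theorem hall_theorem :
    Set.BijOn (fun w : List (Fin 3) => ((w.map hallMatrix).prod).mulVec ![3, 4, 5])
      Set.univ
      {v : Fin 3 → ℤ | 0 < v 0 ∧ 0 < v 1 ∧ 0 < v 2 ∧
        v 0 ^ 2 + v 1 ^ 2 = v 2 ^ 2 ∧ Int.gcd (v 0) (v 1) = 1 ∧ Odd (v 0)} := by
  set f := fun w : List (Fin 3) => ((w.map hallMatrix).prod).mulVec ![3, 4, 5] with hf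
  show Set.BijOn f Set.univ PPT
  have hf_nil : f [] = ![3, 4, 5] := by
    simp [hf, Matrix.one_mulVec]
  have hf_cons : ∀ (i : Fin 3) (t : List (Fin 3)), f (i :: t) = hallMatrix i *ᵥ f t := by
    intro i t
    simp [hf, Matrix.mulVec_mulVec]
  have h345 : (![3, 4, 5] : Fin 3 → ℤ) ∈ PPT :=
    ⟨by norm_num, by norm_num, by decide, by decide, by decide, by decide⟩
  have hmem : ∀ w, f w ∈ PPT := by
    intro w
    induction w with
    | nil => rw [hf_nil]; exact h345
    | cons i t ih => rw [hf_cons]; exact step_mem ih i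
  refine ⟨fun w _ => hmem w, ?_, ?_⟩
  · intro w1 hu1 w2 hu2 h
    clear hu1 hu2
    induction w1 generalizing w2 with
    | nil =>
      cases w2 with
      | nil => rfl
      | cons j t =>
        rw [hf_nil, hf_cons] at h
        exact absurd h.symm (not_parent_345 j (hmem t))
    | cons i t ih =>
      cases w2 with
      | nil =>
        rw [hf_nil, hf_cons] at h
        exact absurd h (not_parent_345 i (hmem t))
      | cons j s =>
        rw [hf_cons, hf_cons] at h
        obtain ⟨hij, hts⟩ := unique_parent (hmem t) (hmem s) h
        rw [hij, ih hts]
  · intro v hv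
    have key : ∀ n : ℕ, ∀ v : Fin 3 → ℤ, v ∈ PPT → v 2 ≤ (n : ℤ) → ∃ w, f w = v := by
      intro n
      induction n with
      | zero =>
        intro v hv hle
        exact absurd hle (by push_cast; linarith [hv.2.2.1])
      | succ n ih =>
        intro v hv hle
        by_cases hv345 : v = ![3, 4, 5]
        · exact ⟨[], by rw [hf_nil, hv345]⟩
        · obtain ⟨i, w, hw, hiw, hlt⟩ := descent hv hv345
          obtain ⟨u, hu⟩ := ih w hw (by push_cast at hle ⊢; linarith)
          exact ⟨i :: u, by rw [hf_cons, hu, hiw]⟩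
    obtain ⟨w, hw⟩ := key (v 2).toNat v hv (Int.self_le_toNat _)
    exact ⟨w, Set.mem_univ w, hw⟩
end

section
/- The matrices Ũ = [[2,1],[1,0]], L̃ = [[2,−1],[1,0]], R̃ = [[1,2],[0,1]] are spin representations of the Hall matrices: for every pair of integers (m,n), Euclid's map intertwines them with the Hall matrices, namely φ(Ũ·(m,n)) = U·φ(m,n), φ(L̃·(m,n)) = L·φ(m,n), and φ(R̃·(m,n)) = R·φ(m,n); moreover det Ũ = −1, det L̃ = 1, det R̃ = 1, so all three lie in SL^±(2,ℤ). -/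
open Matrix

/-- Euclid's map `φ(m,n) = (m²−n², 2mn, m²+n²)`. -/
def euclidMap (u : Fin 2 → ℤ) : Fin 3 → ℤ :=
  ![u 0 ^ 2 - u 1 ^ 2, 2 * u 0 * u 1, u 0 ^ 2 + u 1 ^ 2]

/-- The matrices `Ũ = [[2,1],[1,0]]`, `L̃ = [[2,−1],[1,0]]`,
`R̃ = [[1,2],[0,1]]` are spin representations of the Hall matrices `U`, `L`, `R`:
Euclid's map intertwines them, and `det Ũ = −1`, `det L̃ = det R̃ = 1`, so all three lie
in `SL^±(2,ℤ)`. -/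
theorem hall_spin_representation :
    (∀ u : Fin 2 → ℤ,
      euclidMap ((!![2, 1; 1, 0] : Matrix (Fin 2) (Fin 2) ℤ).mulVec u)
        = (!![1, 2, 2; 2, 1, 2; 2, 2, 3] : Matrix (Fin 3) (Fin 3) ℤ).mulVec (euclidMap u)) ∧
    (∀ u : Fin 2 → ℤ,
      euclidMap ((!![2, -1; 1, 0] : Matrix (Fin 2) (Fin 2) ℤ).mulVec u)
        = (!![1, -2, 2; 2, -1, 2; 2, -2, 3] : Matrix (Fin 3) (Fin 3) ℤ).mulVec (euclidMap u)) ∧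
    (∀ u : Fin 2 → ℤ,
      euclidMap ((!![1, 2; 0, 1] : Matrix (Fin 2) (Fin 2) ℤ).mulVec u)
        = (!![-1, 2, 2; -2, 1, 2; -2, 2, 3] : Matrix (Fin 3) (Fin 3) ℤ).mulVec (euclidMap u)) ∧
    (!![2, 1; 1, 0] : Matrix (Fin 2) (Fin 2) ℤ).det = -1 ∧
    (!![2, -1; 1, 0] : Matrix (Fin 2) (Fin 2) ℤ).det = 1 ∧
    (!![1, 2; 0, 1] : Matrix (Fin 2) (Fin 2) ℤ).det = 1 := by
  refine ⟨?_, ?_, ?_, ?_, ?_, ?_⟩ <;>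
    first
    | (intro u; funext i; fin_cases i <;>
        simp [euclidMap, mulVec, dotProduct, Fin.sum_univ_succ] <;> ring)
    | simp [Matrix.det_fin_two]
end

section
/- The spinor parameterization produces all primitive Pythagorean quadruples: if integers a, b, c, d satisfy a² + b² + c² = d², d > 0, gcd(a,b,c,d) = 1, and b and c are both even, then there exist integers m, n, p, q such that a = m² + n² − p² − q², b = 2(mp + nq), c = 2(np − mq), and d = m² + n² + p² + q². (In particular the quadruple (3, 36, 8, 37), not covered by the classical formula a = 2mp, b = 2np, c = p² − m² − n², d = p² + m² + n², is obtained from (m,n,p,q) = (4,2,4,1).) -/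
open Zsqrtd GaussianInt PrincipalIdealRing

set_option synthInstance.maxHeartbeats 400000 in
lemma myPrimeOfNormPrime {z : GaussianInt} (hz : Nat.Prime (Zsqrtd.norm z).natAbs) :
    Prime z := by
  rw [← irreducible_iff_prime]
  constructor
  · intro hu
    rw [← Zsqrtd.norm_eq_one_iff] at hu
    rw [hu] at hz
    exact hz.one_lt.ne' rfl
  · intro x y hxy
    have hm : (Zsqrtd.norm x).natAbs * (Zsqrtd.norm y).natAbs = (Zsqrtd.norm z).natAbs := by
      rw [hxy, Zsqrtd.norm_mul, Int.natAbs_mul]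
    rcases hz.eq_one_or_self_of_dvd _ ⟨_, hm.symm⟩ with h | h
    · exact Or.inl (Zsqrtd.norm_eq_one_iff.mp h)
    · right
      apply Zsqrtd.norm_eq_one_iff.mp
      have := hz.pos
      rw [h] at hm
      nlinarith [hm]

lemma star_dvd_flip {p u : GaussianInt} (hsp : star p = p) (h : p ∣ star u) : p ∣ u := by
  obtain ⟨v, hv⟩ := h
  refine ⟨star v, ?_⟩
  rw [← star_star u, hv, star_mul, hsp]
  ring

lemma keyDescent (r : ℕ) : ∀ (s : ℤ) (u : GaussianInt), (r : ℤ) * s = Zsqrtd.norm u →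
    (∀ p : ℕ, Nat.Prime p → p ∣ r → (p : ℤ) ∣ s → ¬ ((p : GaussianInt) ∣ u)) →
    0 < r →
    ∃ z w : GaussianInt, u = z * star w ∧ Zsqrtd.norm z = r ∧ Zsqrtd.norm w = s := by
  induction r using Nat.strong_induction_on with
  | _ r ih =>
  intro s u hn hcop hrpos
  rcases eq_or_lt_of_le (Nat.one_le_iff_ne_zero.mpr hrpos.ne') with h1 | h1
  · refine ⟨1, star u, by simp, by simp [← h1], ?_⟩
    rw [Zsqrtd.norm_conj, ← hn, ← h1]
    push_cast
    ring
  -- r > 1 : pick a prime factor p of r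
  obtain ⟨p, hp, hpr⟩ := Nat.exists_prime_and_dvd (by omega : r ≠ 1)
  haveI : Fact p.Prime := ⟨hp⟩
  have hpnormu : (p : ℤ) ∣ Zsqrtd.norm u := by
    rw [← hn]
    exact Dvd.dvd.mul_right (by exact_mod_cast hpr) s
  have hdvdmul : (p : GaussianInt) ∣ u * star u := by
    rw [← Zsqrtd.norm_eq_mul_conj]
    have := map_dvd (Int.castRingHom GaussianInt) hpnormu
    simpa using this
  have main : ∃ (ρ : GaussianInt) (k : ℕ), ρ ∣ u ∧ Zsqrtd.norm ρ = (k : ℤ) ∧ k ∣ r ∧ 1 < k := by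
    by_cases h3 : p % 4 = 3
    · -- inert prime
      have hprime : Prime (p : GaussianInt) :=
        GaussianInt.prime_of_nat_prime_of_mod_four_eq_three p h3
      have hpu : (p : GaussianInt) ∣ u := by
        rcases hprime.dvd_mul.mp hdvdmul with h | h
        · exact h
        · exact star_dvd_flip (by simp) h
      have hps : ¬ (p : ℤ) ∣ s := fun hps => hcop p hp hpr hps hpu
      obtain ⟨u', hu'⟩ := hpu
      have hnu : Zsqrtd.norm u = (p : ℤ) * (p : ℤ) * Zsqrtd.norm u' := by
        rw [hu', Zsqrtd.norm_mul, Zsqrtd.norm_natCast]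
      obtain ⟨r1, hr1⟩ := hpr
      have hcancel : (r1 : ℤ) * s = (p : ℤ) * Zsqrtd.norm u' := by
        have h2 : (p : ℤ) * ((r1 : ℤ) * s) = (p : ℤ) * ((p : ℤ) * Zsqrtd.norm u') := by
          push_cast [hr1] at hn
          linarith [hn, hnu]
        exact mul_left_cancel₀ (by exact_mod_cast hp.ne_zero : (p : ℤ) ≠ 0) h2
      have hpr1 : p ∣ r1 := by
        have hd1 : (p : ℤ) ∣ (r1 : ℤ) * s := ⟨Zsqrtd.norm u', hcancel⟩
        rcases (Int.Prime.dvd_mul' hp hd1) with h | h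
        · exact_mod_cast h
        · exact absurd h hps
      obtain ⟨r2, hr2⟩ := hpr1
      refine ⟨(p : GaussianInt), p * p, ⟨u', hu'⟩, by rw [Zsqrtd.norm_natCast]; push_cast; ring, ?_, ?_⟩
      · exact ⟨r2, by rw [hr1, hr2]; ring⟩
      · nlinarith [hp.two_le]
    · -- split prime : p = x² + y²
      obtain ⟨x, y, hxy⟩ := Nat.Prime.sq_add_sq h3
      set π : GaussianInt := ⟨(x : ℤ), (y : ℤ)⟩ with hπ
      have hnπ : Zsqrtd.norm π = (p : ℤ) := by
        rw [Zsqrtd.norm_def, hπ]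
        push_cast [← hxy]
        ring
      have hprime : Prime π := myPrimeOfNormPrime (by rw [hnπ]; simpa using hp)
      have hpfac : (p : GaussianInt) = π * star π := by
        have := Zsqrtd.norm_eq_mul_conj π
        rw [hnπ] at this
        exact_mod_cast this
      have hπdvd : π ∣ u * star u := by
        refine dvd_trans ?_ hdvdmul
        rw [hpfac]
        exact Dvd.intro _ rfl
      rcases hprime.dvd_mul.mp hπdvd with h | h
      · exact ⟨π, p, h, hnπ, hpr, hp.one_lt⟩
      · refine ⟨star π, p, ?_, by rw [Zsqrtd.norm_conj, hnπ], hpr, hp.one_lt⟩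
        obtain ⟨v, hv⟩ := h
        exact ⟨star v, by rw [← star_star u, hv, star_mul]; ring⟩
  -- common descent step
  obtain ⟨ρ, k, ⟨u', hu'⟩, hkρ, ⟨r', hr'⟩, hk1⟩ := main
  have hkz : ((k : ℕ) : ℤ) ≠ 0 := by exact_mod_cast (by omega : k ≠ 0)
  have hn' : (r' : ℤ) * s = Zsqrtd.norm u' := by
    apply mul_left_cancel₀ hkz
    have : Zsqrtd.norm u = (k : ℤ) * Zsqrtd.norm u' := by
      rw [hu', Zsqrtd.norm_mul, hkρ]
    push_cast [hr'] at hn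
    linarith [hn, this]
  have hr'pos : 0 < r' := by
    rcases Nat.eq_zero_or_pos r' with h | h
    · rw [h, mul_zero] at hr'; omega
    · exact h
  have hr'lt : r' < r := by nlinarith
  have hcop' : ∀ q : ℕ, Nat.Prime q → q ∣ r' → (q : ℤ) ∣ s → ¬ ((q : GaussianInt) ∣ u') := by
    intro q hq hqr' hqs hqu'
    exact hcop q hq (hqr'.trans ⟨k, by rw [hr']; ring⟩) hqs (hqu'.trans ⟨ρ, by rw [hu']; ring⟩)
  obtain ⟨z', w, huz, hz', hw⟩ := ih r' hr'lt s u' hn' hcop' hr'pos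
  refine ⟨ρ * z', w, ?_, ?_, hw⟩
  · rw [hu', huz, mul_assoc]
  · rw [Zsqrtd.norm_mul, hkρ, hz', hr']
    push_cast
    ring

/-- The spinor parameterization produces all primitive Pythagorean
quadruples: if `a² + b² + c² = d²`, `d > 0`, `gcd(a,b,c,d) = 1`, and `b`, `c` are even,
then `(a,b,c,d)` arises from integers `m, n, p, q` via
`a = m²+n²−p²−q²`, `b = 2(mp+nq)`, `c = 2(np−mq)`, `d = m²+n²+p²+q²`. -/
theorem pythagorean_quadruple_param_surjective (a b c d : ℤ)
    (h : a ^ 2 + b ^ 2 + c ^ 2 = d ^ 2) (hd : 0 < d)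
    (hgcd : Int.gcd (Int.gcd (Int.gcd a b) c) d = 1)
    (hb : Even b) (hc : Even c) :
    ∃ m n p q : ℤ,
      a = m ^ 2 + n ^ 2 - p ^ 2 - q ^ 2 ∧
      b = 2 * (m * p + n * q) ∧
      c = 2 * (n * p - m * q) ∧
      d = m ^ 2 + n ^ 2 + p ^ 2 + q ^ 2 := by
  obtain ⟨b', hb'⟩ := hb
  obtain ⟨c', hc'⟩ := hc
  have hb2 : b = 2 * b' := by omega
  have hc2 : c = 2 * c' := by omega
  -- d is odd
  have hdodd : Odd d := by
    by_contra hde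
    rw [Int.not_odd_iff_even] at hde
    have ha : Even a := by
      have h2 : Even (a ^ 2) := by
        have h3 : a ^ 2 = d ^ 2 - b ^ 2 - c ^ 2 := by linarith
        rw [h3]
        exact Even.sub (Even.sub (Int.even_pow.mpr ⟨hde, by norm_num⟩)
          (Int.even_pow.mpr ⟨⟨b', hb'⟩, by norm_num⟩))
          (Int.even_pow.mpr ⟨⟨c', hc'⟩, by norm_num⟩)
      exact (Int.even_pow.mp h2).1
    have h2 : (2 : ℤ) ∣ (Int.gcd (Int.gcd (Int.gcd a b) c) d : ℤ) :=
      Int.dvd_coe_gcd (Int.dvd_coe_gcd (Int.dvd_coe_gcd ha.two_dvd ⟨b', by linarith⟩) ⟨c', by linarith⟩)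
        hde.two_dvd
    rw [hgcd] at h2
    norm_num at h2
  -- a is odd
  have haodd : Odd a := by
    rcases Int.even_or_odd a with ha | ha
    · exfalso
      have h2 : Even (d ^ 2) := by
        have h3 : d ^ 2 = a ^ 2 + b ^ 2 + c ^ 2 := h.symm
        rw [h3]
        exact Even.add (Even.add (Int.even_pow.mpr ⟨ha, by norm_num⟩)
          (Int.even_pow.mpr ⟨⟨b', hb'⟩, by norm_num⟩))
          (Int.even_pow.mpr ⟨⟨c', hc'⟩, by norm_num⟩)
      exact (Int.not_odd_iff_even.mpr (Int.even_pow.mp h2).1) hdodd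
    · exact ha
  -- bounds : -d ≤ a ≤ d
  have hbound : a ^ 2 ≤ d ^ 2 := by nlinarith [sq_nonneg b, sq_nonneg c]
  have haled : a ≤ d := by nlinarith [sq_nonneg (a - d), sq_nonneg (a + d)]
  have hnegd : -d ≤ a := by nlinarith [sq_nonneg (a - d), sq_nonneg (a + d)]
  rcases eq_or_lt_of_le hnegd with hedge | hedge
  · -- a = -d : then b = c = 0, d = 1
    have ha : a = -d := hedge.symm
    have hb0 : b = 0 := by nlinarith [sq_nonneg b, sq_nonneg c]
    have hc0 : c = 0 := by nlinarith [sq_nonneg b, sq_nonneg c]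
    have hd1 : d = 1 := by
      rw [hb0, hc0, ha] at hgcd
      simp [Int.gcd] at hgcd
      rw [Int.natAbs_abs, Nat.gcd_self] at hgcd
      omega
    exact ⟨0, 0, 1, 0, by simp [ha, hd1], by simp [hb0], by simp [hc0], by simp [hd1]⟩
  -- main case : set r = (d+a)/2 > 0, s = (d-a)/2 ≥ 0
  obtain ⟨t, ht⟩ := hdodd
  obtain ⟨t', ht'⟩ := haodd
  obtain ⟨r, hr⟩ : ∃ r, d + a = 2 * r := ⟨t + t' + 1, by omega⟩
  obtain ⟨s, hs⟩ : ∃ s, d - a = 2 * s := ⟨t - t', by omega⟩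
  have hrpos : 0 < r := by linarith
  have hspos : 0 ≤ s := by linarith
  set u : GaussianInt := ⟨b', c'⟩ with hu
  have hnu : Zsqrtd.norm u = b' * b' + c' * c' := by
    rw [Zsqrtd.norm_def]
    ring
  have hrs : (r.toNat : ℤ) * s = Zsqrtd.norm u := by
    have h4 : (2 * r) * (2 * s) = b * b + c * c := by
      rw [← hr, ← hs]
      linear_combination -h
    rw [hb2, hc2] at h4
    have h5 : 4 * (r * s) = 4 * (b' * b') + 4 * (c' * c') := by linear_combination h4
    rw [Int.toNat_of_nonneg hrpos.le, hnu]
    linarith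
  have hcop : ∀ p : ℕ, Nat.Prime p → p ∣ r.toNat → (p : ℤ) ∣ s → ¬ ((p : GaussianInt) ∣ u) := by
    intro p hp hpr hps hpu
    have hpr' : (p : ℤ) ∣ r := by
      rw [← Int.toNat_of_nonneg hrpos.le]
      exact_mod_cast Int.natCast_dvd_natCast.mpr hpr
    obtain ⟨k1, hk1⟩ := hpr'
    obtain ⟨k2, hk2⟩ := hps
    have hpd : (p : ℤ) ∣ d := ⟨k1 + k2, by rw [show d = r + s by omega, hk1, hk2]; ring⟩
    have hpa : (p : ℤ) ∣ a := ⟨k1 - k2, by rw [show a = r - s by omega, hk1, hk2]; ring⟩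
    have hpbc : (p : ℤ) ∣ b' ∧ (p : ℤ) ∣ c' := by
      have := (Zsqrtd.intCast_dvd (p : ℤ) u).mp (by exact_mod_cast hpu)
      exact this
    obtain ⟨e1, he1⟩ := hpbc.1
    obtain ⟨e2, he2⟩ := hpbc.2
    have hpb : (p : ℤ) ∣ b := ⟨2 * e1, by rw [hb2, he1]; ring⟩
    have hpc : (p : ℤ) ∣ c := ⟨2 * e2, by rw [hc2, he2]; ring⟩
    have h2 : (p : ℤ) ∣ (Int.gcd (Int.gcd (Int.gcd a b) c) d : ℤ) :=
      Int.dvd_coe_gcd (Int.dvd_coe_gcd (Int.dvd_coe_gcd hpa hpb) hpc) hpd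
    rw [hgcd] at h2
    have := Int.le_of_dvd (by norm_num) h2
    have := hp.two_le
    omega
  obtain ⟨z, w, huzw, hz, hw⟩ :=
    keyDescent r.toNat s u hrs hcop (by omega)
  refine ⟨z.re, z.im, w.re, w.im, ?_, ?_, ?_, ?_⟩
  · have h1 : Zsqrtd.norm z = z.re ^ 2 + z.im ^ 2 := by rw [Zsqrtd.norm_def]; ring
    have h2 : Zsqrtd.norm w = w.re ^ 2 + w.im ^ 2 := by rw [Zsqrtd.norm_def]; ring
    rw [h1] at hz
    rw [h2] at hw
    rw [Int.toNat_of_nonneg hrpos.le] at hz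
    omega
  · have : b' = u.re := rfl
    rw [huzw] at this
    simp only [Zsqrtd.re_mul, Zsqrtd.re_star, Zsqrtd.im_star] at this
    rw [hb2, this]
    ring
  · have : c' = u.im := rfl
    rw [huzw] at this
    simp only [Zsqrtd.im_mul, Zsqrtd.re_star, Zsqrtd.im_star] at this
    rw [hc2, this]
    ring
  · have h1 : Zsqrtd.norm z = z.re ^ 2 + z.im ^ 2 := by rw [Zsqrtd.norm_def]; ring
    have h2 : Zsqrtd.norm w = w.re ^ 2 + w.im ^ 2 := by rw [Zsqrtd.norm_def]; ring
    rw [h1] at hz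
    rw [h2] at hw
    rw [Int.toNat_of_nonneg hrpos.le] at hz
    omega
end

section
/- Parameterization of Pythagorean hexads: for all integers m₀, m₁, m₂, m₃, n₀, n₁, n₂, n₃, setting a₀ = (m₀²+m₁²+m₂²+m₃²) + (n₀²+n₁²+n₂²+n₃²), a₁ = 2(n₀m₁ − n₁m₀ + m₃n₂ − m₂n₃), a₂ = 2(n₀m₂ − n₂m₀ + m₁n₃ − m₃n₁), a₃ = 2(n₀m₃ − n₃m₀ + m₂n₁ − m₁n₂), a₄ = 2(m₀n₀ + m₁n₁ + m₂n₂ + m₃n₃), a₅ = (m₀²+m₁²+m₂²+m₃²) − (n₀²+n₁²+n₂²+n₃²), one has a₀² = a₁² + a₂² + a₃² + a₄² + a₅². -/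
/-- Parameterization of Pythagorean hexads: for all integers
`m₀,…,m₃, n₀,…,n₃`, the six numbers `a₀ = |m|²+|n|²`, `a₁, a₂, a₃` (twice the commutator
components), `a₄ = 2m·n`, `a₅ = |m|²−|n|²` satisfy `a₀² = a₁²+a₂²+a₃²+a₄²+a₅²`. -/
theorem pythagorean_hexad_param (m₀ m₁ m₂ m₃ n₀ n₁ n₂ n₃ : ℤ) :
    ((m₀ ^ 2 + m₁ ^ 2 + m₂ ^ 2 + m₃ ^ 2) + (n₀ ^ 2 + n₁ ^ 2 + n₂ ^ 2 + n₃ ^ 2)) ^ 2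
      = (2 * (n₀ * m₁ - n₁ * m₀ + m₃ * n₂ - m₂ * n₃)) ^ 2
        + (2 * (n₀ * m₂ - n₂ * m₀ + m₁ * n₃ - m₃ * n₁)) ^ 2
        + (2 * (n₀ * m₃ - n₃ * m₀ + m₂ * n₁ - m₁ * n₂)) ^ 2
        + (2 * (m₀ * n₀ + m₁ * n₁ + m₂ * n₂ + m₃ * n₃)) ^ 2
        + ((m₀ ^ 2 + m₁ ^ 2 + m₂ ^ 2 + m₃ ^ 2) - (n₀ ^ 2 + n₁ ^ 2 + n₂ ^ 2 + n₃ ^ 2)) ^ 2 := by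
  ring
end
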